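/- arXiv:2107.01155 — 10 statements merged into one kernel-verified Lean document; each statement's English description precedes it below -/
import Mathlib

section
/- Let X be a measurable space and equip Measure X with its canonical measurable-space structure. Let P : X → Prop be an arbitrary predicate and δ₁, δ₂ ∈ [0,1]. Let Ξ be a probability measure on Measure X such that Ξ {ν | ν is a probability measure} = 1. If Ξ satisfies the union-bound lifting UB(δ₁) applied to the predicate 'ν satisfies UB(δ₂)(P)' on Measure X, then the join Ξ.join (the measure A ↦ ∫⁻ ν A dΞ(ν)) satisfies UB(δ₁ + δ₂)(P). (This is the multiplication law of the union-bound graded lifting, proved via Markov's inequality.) -/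
open MeasureTheory ENNReal

/-! Fix a test `f` and put `S = {x | f x = true}`. Every `ν` satisfying `UB δ₂ P` passes the
measurable test `ν ↦ (1 - δ₂ ≤ ν S)` on measures, so the hypothesis on `Ξ` gives the measures
passing it `Ξ`-mass at least `1 - δ₁`. Markov's inequality for `ν ↦ ν S` then bounds
`Ξ.join S = ∫⁻ ν, ν S ∂Ξ` below by `(1 - δ₂) (1 - δ₁) ≥ 1 - (δ₁ + δ₂)`. -/

/-- The union-bound graded lifting: a (probability) measure `ν` on `X` satisfies
`UB δ P` iff for every measurable Boolean test `f` that is `true` whenever `P` holds,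
the measure of `{x | f x = true}` is at least `1 - δ`. -/
def UB {X : Type*} [MeasurableSpace X] (δ : ℝ≥0∞) (P : X → Prop) (ν : Measure X) : Prop :=
  ∀ f : X → Bool, Measurable f → (∀ x, P x → f x = true) → 1 - δ ≤ ν {x | f x = true}

lemma ENNReal.one_sub_add_le_mul_one_sub (a b : ℝ≥0∞) : 1 - (a + b) ≤ (1 - a) * (1 - b) := by
  have hb : (1 - a) * b ≤ b := mul_le_of_le_one_left zero_le tsub_le_self
  calc 1 - (a + b) = (1 - a) - b := tsub_add_eq_tsub_tsub _ _ _
    _ ≤ (1 - a) * 1 - (1 - a) * b := by rw [mul_one]; exact tsub_le_tsub_left hb _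
    _ = (1 - a) * (1 - b) :=
      (ENNReal.mul_sub fun _ _ => (tsub_le_self.trans_lt one_lt_top).ne).symm

lemma MeasureTheory.Measure.measurable_decide_le_apply {X : Type*} [MeasurableSpace X]
    {s : Set X} (hs : MeasurableSet s) (c : ℝ≥0∞) :
    Measurable fun ν : Measure X => decide (c ≤ ν s) :=
  measurable_to_bool <| by
    simpa only [Set.preimage, Set.mem_singleton_iff, decide_eq_true_eq, Set.mem_Ici] using
      Measure.measurable_coe hs measurableSet_Ici

lemma MeasureTheory.Measure.mul_measure_setOf_le_apply_le_join_apply {X : Type*}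
    [MeasurableSpace X] (Ξ : Measure (Measure X)) {s : Set X} (hs : MeasurableSet s) (c : ℝ≥0∞) :
    c * Ξ {ν | c ≤ ν s} ≤ Ξ.join s := by
  rw [Measure.join_apply hs]
  exact mul_meas_ge_le_lintegral (Measure.measurable_coe hs) c

theorem UB_join_general {X : Type*} [MeasurableSpace X] (P : X → Prop) (δ₁ δ₂ : ℝ≥0∞)
    (Ξ : Measure (Measure X))
    (hΞ : UB δ₁ (fun ν : Measure X => UB δ₂ P ν) Ξ) :
    UB (δ₁ + δ₂) P Ξ.join := by
  intro f hf hfP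
  have hS : MeasurableSet {x | f x = true} := hf (measurableSet_singleton true)
  have hgood : 1 - δ₁ ≤ Ξ {ν | 1 - δ₂ ≤ ν {x | f x = true}} := by
    simpa only [decide_eq_true_eq] using
      hΞ _ (Measure.measurable_decide_le_apply hS (1 - δ₂))
        fun ν hν => decide_eq_true (hν f hf hfP)
  calc 1 - (δ₁ + δ₂) ≤ (1 - δ₂) * (1 - δ₁) := by
        rw [add_comm]; exact ENNReal.one_sub_add_le_mul_one_sub δ₂ δ₁
    _ ≤ (1 - δ₂) * Ξ {ν | 1 - δ₂ ≤ ν {x | f x = true}} := by gcongr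
    _ ≤ Ξ.join {x | f x = true} := Measure.mul_measure_setOf_le_apply_le_join_apply Ξ hS _

/-- Multiplication law of the union-bound graded lifting (proved via Markov's inequality). -/
theorem UB_join {X : Type*} [MeasurableSpace X] (P : X → Prop) (δ₁ δ₂ : ℝ≥0∞)
    (hδ₁ : δ₁ ≤ 1) (hδ₂ : δ₂ ≤ 1)
    (Ξ : Measure (Measure X)) [IsProbabilityMeasure Ξ]
    (hprob : Ξ {ν : Measure X | IsProbabilityMeasure ν} = 1)
    (hΞ : UB δ₁ (fun ν : Measure X => UB δ₂ P ν) Ξ) :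
    UB (δ₁ + δ₂) P Ξ.join :=
  UB_join_general P δ₁ δ₂ Ξ hΞ
end

section
/- Let X and Y be measurable spaces, P : X → Prop and Q : Y → Prop arbitrary predicates, and δ ∈ [0,1]. Let x ∈ X be a point with P x and let μ be a probability measure on Y satisfying UB(δ)(Q). Then the pushforward measure μ.map (fun y => (x, y)) on X × Y satisfies UB(δ) applied to the predicate fun p => P p.1 ∧ Q p.2. (This is the strength law of the union-bound graded lifting.) -/
open MeasureTheory ENNReal

/-- Strength law of the union-bound graded lifting. -/
theorem UB_strength {X Y : Type*} [MeasurableSpace X] [MeasurableSpace Y]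
    (P : X → Prop) (Q : Y → Prop) (δ : ℝ≥0∞) (hδ : δ ≤ 1)
    (x : X) (hx : P x) (μ : Measure Y) [IsProbabilityMeasure μ]
    (hμ : UB δ Q μ) :
    UB δ (fun p : X × Y => P p.1 ∧ Q p.2) (μ.map (fun y => (x, y))) := by
  intro f hf hfP
  have hpair : Measurable (fun y : Y => (x, y)) := measurable_const.prodMk measurable_id
  have hset : MeasurableSet {p : X × Y | f p = true} := hf (measurableSet_singleton true)
  rw [Measure.map_apply hpair hset]
  exact hμ (fun y => f (x, y)) (hf.comp hpair) (fun y hy => hfP (x, y) ⟨hx, hy⟩)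
end

section
/- Let X be a measurable space, f : X → Measure X a measurable function all of whose values are probability measures, μ a probability measure on X, and define the iterates μ₀ = μ and μ_{n+1} = μ_n.bind f. Let Q ⊆ X be a measurable set such that (f x) Q ≥ 1 − δ' for every x ∈ Q, and suppose μ Q ≥ 1 − δ. Then μ_n Q ≥ 1 − δ − n·δ' for every n ∈ ℕ. (This union bound over iterations is the semantic core of the MFOLD-U rule and of the adversary rule ADV-U: an invariant preserved by each oracle call with error probability δ' is preserved after k calls with error probability k·δ'.) -/
open MeasureTheory ENNReal

/-! Mass in `Q` can only leak at rate `δ'` per step: `ν.bind f` keeps at least a `(1 - δ')`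
fraction of the mass `ν` puts on `Q`, and `(1 - δ') * b ≥ b - δ'` for `b ≤ 1`. -/

theorem ENNReal.sub_le_one_sub_mul {a b : ℝ≥0∞} (hb : b ≤ 1) : b - a ≤ (1 - a) * b := by
  rcases le_or_gt a 1 with ha | ha
  · have hb_ne_top : b ≠ ∞ := ne_top_of_le_ne_top one_ne_top hb
    calc b - a ≤ b - a * b := tsub_le_tsub_left (mul_le_of_le_one_right' hb) b
      _ = (1 - a) * b := by rw [ENNReal.sub_mul fun _ _ ↦ hb_ne_top, one_mul]
  · simp [tsub_eq_zero_of_le (hb.trans ha.le)]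

theorem MeasureTheory.Measure.mul_measure_le_bind_apply {X : Type*} [MeasurableSpace X]
    {f : X → Measure X} (hf : Measurable f) (ν : Measure X) {Q : Set X} (hQ : MeasurableSet Q)
    {c : ℝ≥0∞} (hc : ∀ x ∈ Q, c ≤ f x Q) :
    c * ν Q ≤ ν.bind f Q := by
  rw [Measure.bind_apply hQ hf.aemeasurable]
  calc c * ν Q = ∫⁻ _ in Q, c ∂ν := (setLIntegral_const Q c).symm
    _ ≤ ∫⁻ x in Q, f x Q ∂ν := setLIntegral_mono ((Measure.measurable_coe hQ).comp hf) hc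
    _ ≤ ∫⁻ x, f x Q ∂ν := setLIntegral_le_lintegral Q _

theorem iter_union_bound_general {X : Type*} [MeasurableSpace X]
    (f : X → Measure X) (hf : Measurable f)
    (μ : Measure X)
    (μs : ℕ → Measure X) (h0 : μs 0 = μ) (hsucc : ∀ n, μs (n + 1) = (μs n).bind f)
    (Q : Set X) (hQm : MeasurableSet Q) (δ δ' : ℝ≥0∞)
    (hpres : ∀ x ∈ Q, 1 - δ' ≤ f x Q)
    (hinit : 1 - δ ≤ μ Q) :
    ∀ n : ℕ, 1 - δ - n * δ' ≤ μs n Q := by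
  intro n
  induction n with
  | zero => simpa [h0] using hinit
  | succ n ih =>
    have hle_one : 1 - δ - n * δ' ≤ 1 := tsub_le_self.trans tsub_le_self
    calc 1 - δ - (n + 1 : ℕ) * δ' = 1 - δ - n * δ' - δ' := by
          rw [Nat.cast_succ, add_one_mul, tsub_add_eq_tsub_tsub]
      _ ≤ (1 - δ') * (1 - δ - n * δ') := ENNReal.sub_le_one_sub_mul hle_one
      _ ≤ (1 - δ') * μs n Q := by gcongr
      _ ≤ μs (n + 1) Q := hsucc n ▸ (μs n).mul_measure_le_bind_apply hf hQm hpres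

/-- A union bound over iterations: the semantic core of the `MFOLD-U` rule and of the
adversary rule `ADV-U`.  An invariant `Q` that holds initially with error probability `δ`
and is preserved by each step `f` with error probability `δ'` still holds after `n`
iterations with error probability `δ + n·δ'`. -/
theorem iter_union_bound {X : Type*} [MeasurableSpace X]
    (f : X → Measure X) (hf : Measurable f) (hfp : ∀ x, IsProbabilityMeasure (f x))
    (μ : Measure X) [IsProbabilityMeasure μ]
    (μs : ℕ → Measure X) (h0 : μs 0 = μ) (hsucc : ∀ n, μs (n + 1) = (μs n).bind f)
    (Q : Set X) (hQm : MeasurableSet Q) (δ δ' : ℝ≥0∞)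
    (hpres : ∀ x ∈ Q, 1 - δ' ≤ f x Q)
    (hinit : 1 - δ ≤ μ Q) :
    ∀ n : ℕ, 1 - δ - n * δ' ≤ μs n Q :=
  iter_union_bound_general f hf μ μs h0 hsucc Q hQm δ δ' hpres hinit
end

section
/- Let X be a measurable space, f : X → Measure X a measurable function all of whose values are probability measures, μ a probability measure on X, and define the iterates μ₀ = μ and μ_{n+1} = μ_n.bind f. Let Q : X → [0,∞] be a measurable function such that ∫⁻ Q d(f x) ≤ Q x + δ' for every x ∈ X. Then ∫⁻ Q dμ_n ≤ ∫⁻ Q dμ + n·δ' for every n ∈ ℕ. (This is the semantic core of the adversary rule in the higher-order expectation logic: if each oracle call increases the expected value of a quantity Q by at most δ', then k calls increase it by at most k·δ'.) -/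
open MeasureTheory ENNReal

theorem MeasureTheory.Measure.lintegral_bind_le_add {α β : Type*} [MeasurableSpace α]
    [MeasurableSpace β] {ν : Measure α} [IsProbabilityMeasure ν] {κ : α → Measure β}
    (hκ : AEMeasurable κ ν) {Q : β → ℝ≥0∞} (hQ : AEMeasurable Q (ν.bind κ)) {R : α → ℝ≥0∞}
    {δ : ℝ≥0∞} (h : ∀ᵐ x ∂ν, ∫⁻ y, Q y ∂(κ x) ≤ R x + δ) :
    ∫⁻ y, Q y ∂(ν.bind κ) ≤ ∫⁻ x, R x ∂ν + δ :=
  calc ∫⁻ y, Q y ∂(ν.bind κ)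
      = ∫⁻ x, ∫⁻ y, Q y ∂(κ x) ∂ν := Measure.lintegral_bind hκ hQ
    _ ≤ ∫⁻ x, (R x + δ) ∂ν := lintegral_mono_ae h
    _ = ∫⁻ x, R x ∂ν + δ := by
      rw [lintegral_add_right _ measurable_const, lintegral_const, measure_univ, mul_one]

/-- Semantic core of the adversary rule in the higher-order expectation logic: if each
oracle call increases the expected value of a quantity `Q` by at most `δ'`, then `n`
calls increase it by at most `n·δ'`. -/
theorem iter_expectation {X : Type*} [MeasurableSpace X]
    (f : X → Measure X) (hf : Measurable f) (hfp : ∀ x, IsProbabilityMeasure (f x))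
    (μ : Measure X) [IsProbabilityMeasure μ]
    (μs : ℕ → Measure X) (h0 : μs 0 = μ) (hsucc : ∀ n, μs (n + 1) = (μs n).bind f)
    (Q : X → ℝ≥0∞) (hQm : Measurable Q) (δ' : ℝ≥0∞)
    (hpres : ∀ x, ∫⁻ y, Q y ∂(f x) ≤ Q x + δ') :
    ∀ n : ℕ, ∫⁻ x, Q x ∂(μs n) ≤ (∫⁻ x, Q x ∂μ) + n * δ' := by
  have hprob : ∀ n, IsProbabilityMeasure (μs n) := by
    intro n
    induction n with
    | zero => exact h0 ▸ ‹_›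
    | succ n ih => exact hsucc n ▸ isProbabilityMeasure_bind hf.aemeasurable (ae_of_all _ hfp)
  intro n
  induction n with
  | zero => simp [h0]
  | succ n ih =>
    calc ∫⁻ x, Q x ∂(μs (n + 1))
        ≤ ∫⁻ x, Q x ∂(μs n) + δ' := hsucc n ▸
          Measure.lintegral_bind_le_add hf.aemeasurable hQm.aemeasurable (ae_of_all _ hpres)
      _ ≤ ∫⁻ x, Q x ∂μ + n * δ' + δ' := by gcongr
      _ = ∫⁻ x, Q x ∂μ + (n + 1 : ℕ) * δ' := by push_cast; ring
end

section
/- Let X, X', Y, Y' be measurable spaces, R ⊆ X × Y and Q ⊆ X' × Y' relations, μ₁ and μ₂ probability measures on X and Y respectively, and h : X → Measure X', k : Y → Measure Y' measurable functions all of whose values are probability measures. If dp(ε,δ)(R)(μ₁, μ₂) holds and dp(ε',δ')(Q)(h x, k y) holds for every (x,y) ∈ R, then dp(ε+ε', δ+δ')(Q)(μ₁.bind h, μ₂.bind k). (This is the Kleisli/multiplication law of the graded relational lifting for differential privacy.) -/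
open MeasureTheory ENNReal

/-- The `(ε,δ)`-closeness condition on distributions over `Bool`:
`ν₁ {false} ≤ exp ε · ν₂ {false} + δ`. -/
def Scond (ε δ : NNReal) (ν₁ ν₂ : Measure Bool) : Prop :=
  ν₁ {false} ≤ ENNReal.ofReal (Real.exp ε) * ν₂ {false} + δ

/-- The graded relational lifting for differential privacy. -/
def dp {X Y : Type*} [MeasurableSpace X] [MeasurableSpace Y]
    (ε δ : NNReal) (R : Set (X × Y)) (μ₁ : Measure X) (μ₂ : Measure Y) : Prop :=
  ∀ (ε' δ' : NNReal) (f : X → Measure Bool) (g : Y → Measure Bool),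
    Measurable f → Measurable g →
    (∀ x, IsProbabilityMeasure (f x)) → (∀ y, IsProbabilityMeasure (g y)) →
    (∀ x y, (x, y) ∈ R → Scond ε' δ' (f x) (g y)) →
    Scond (ε + ε') (δ + δ') (μ₁.bind f) (μ₂.bind g)

theorem dp_bind_general {X X' Y Y' : Type*} [MeasurableSpace X] [MeasurableSpace X']
    [MeasurableSpace Y] [MeasurableSpace Y']
    (R : Set (X × Y)) (Q : Set (X' × Y')) (ε δ ε' δ' : NNReal)
    (μ₁ : Measure X) (μ₂ : Measure Y)
    (h : X → Measure X') (k : Y → Measure Y')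
    (hh : Measurable h) (hk : Measurable k)
    (hhp : ∀ x, IsProbabilityMeasure (h x)) (hkp : ∀ y, IsProbabilityMeasure (k y))
    (hR : dp ε δ R μ₁ μ₂)
    (hQ : ∀ x y, (x, y) ∈ R → dp ε' δ' Q (h x) (k y)) :
    dp (ε + ε') (δ + δ') Q (μ₁.bind h) (μ₂.bind k) := by
  intro ε'' δ'' f g hf hg hfp hgp hfg
  -- The test pair `(f, g)` for `Q`, pushed through `h` and `k`, is a test pair for `R`.
  have hR_test := hR (ε' + ε'') (δ' + δ'') (fun x => (h x).bind f) (fun y => (k y).bind g)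
    ((Measure.measurable_bind' hf).comp hh) ((Measure.measurable_bind' hg).comp hk)
    (fun x => haveI := hhp x; isProbabilityMeasure_bind hf.aemeasurable (ae_of_all _ hfp))
    (fun y => haveI := hkp y; isProbabilityMeasure_bind hg.aemeasurable (ae_of_all _ hgp))
    (fun x y hxy => hQ x y hxy ε'' δ'' f g hf hg hfp hgp hfg)
  rwa [Measure.bind_bind hh.aemeasurable hf.aemeasurable,
    Measure.bind_bind hk.aemeasurable hg.aemeasurable, add_assoc, add_assoc]

/-- Kleisli/multiplication law of the graded relational lifting for differential privacy. -/
theorem dp_bind {X X' Y Y' : Type*} [MeasurableSpace X] [MeasurableSpace X']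
    [MeasurableSpace Y] [MeasurableSpace Y']
    (R : Set (X × Y)) (Q : Set (X' × Y')) (ε δ ε' δ' : NNReal)
    (μ₁ : Measure X) (μ₂ : Measure Y)
    [IsProbabilityMeasure μ₁] [IsProbabilityMeasure μ₂]
    (h : X → Measure X') (k : Y → Measure Y')
    (hh : Measurable h) (hk : Measurable k)
    (hhp : ∀ x, IsProbabilityMeasure (h x)) (hkp : ∀ y, IsProbabilityMeasure (k y))
    (hR : dp ε δ R μ₁ μ₂)
    (hQ : ∀ x y, (x, y) ∈ R → dp ε' δ' Q (h x) (k y)) :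
    dp (ε + ε') (δ + δ') Q (μ₁.bind h) (μ₂.bind k) :=
  dp_bind_general R Q ε δ ε' δ' μ₁ μ₂ h k hh hk hhp hkp hR hQ
end

section
/- Let X, Y, X', Y' be measurable spaces, R ⊆ X × Y and Q ⊆ X' × Y' relations, (x, y) ∈ R, and ν₁, ν₂ probability measures on X' and Y' respectively with dp(ε,δ)(Q)(ν₁, ν₂). Then dp(ε,δ)(R ×̇ Q)(ν₁.map (fun a => (x, a)), ν₂.map (fun b => (y, b))), where R ×̇ Q = {((a, a'), (b, b')) | (a, b) ∈ R ∧ (a', b') ∈ Q} ⊆ (X × X') × (Y × Y'). (This is the strength law of the graded relational lifting for differential privacy.) -/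
open MeasureTheory ENNReal

/-
The strength map `a ↦ (x, a)` is measurable, and binding after a pushforward is binding
along the composite, so a test pair `(f, g)` for `R ×̇ Q` restricts to the test pair
`(f (x, ·), g (y, ·))` for `Q`; its hypothesis holds because `(x, y) ∈ R`.
-/

theorem MeasureTheory.Measure.bind_map {α β γ : Type*} [MeasurableSpace α] [MeasurableSpace β]
    [MeasurableSpace γ] (μ : Measure α) {e : α → β} (he : Measurable e) {f : β → Measure γ}
    (hf : Measurable f) :
    (μ.map e).bind f = μ.bind (f ∘ e) := by
  ext s hs
  rw [Measure.bind_apply hs hf.aemeasurable, Measure.bind_apply hs (hf.comp he).aemeasurable]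
  exact lintegral_map ((Measure.measurable_coe hs).comp hf) he

theorem dp_map {X Y X' Y' : Type*} [MeasurableSpace X] [MeasurableSpace Y]
    [MeasurableSpace X'] [MeasurableSpace Y'] {ε δ : NNReal} {Q : Set (X × Y)}
    {S : Set (X' × Y')} {ν₁ : Measure X} {ν₂ : Measure Y} {e₁ : X → X'} {e₂ : Y → Y'}
    (he₁ : Measurable e₁) (he₂ : Measurable e₂) (hQS : ∀ a b, (a, b) ∈ Q → (e₁ a, e₂ b) ∈ S)
    (h : dp ε δ Q ν₁ ν₂) :
    dp ε δ S (ν₁.map e₁) (ν₂.map e₂) := by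
  intro ε' δ' f g hf hg hfp hgp hfg
  rw [Measure.bind_map _ he₁ hf, Measure.bind_map _ he₂ hg]
  exact h ε' δ' _ _ (hf.comp he₁) (hg.comp he₂) (fun a => hfp _) (fun b => hgp _)
    (fun a b hab => hfg _ _ (hQS a b hab))

theorem dp_strength_general {X Y X' Y' : Type*} [MeasurableSpace X] [MeasurableSpace Y]
    [MeasurableSpace X'] [MeasurableSpace Y']
    (R : Set (X × Y)) (Q : Set (X' × Y')) (ε δ : NNReal)
    (x : X) (y : Y) (hxy : (x, y) ∈ R)
    (ν₁ : Measure X') (ν₂ : Measure Y')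
    (h : dp ε δ Q ν₁ ν₂) :
    dp ε δ
      {p : (X × X') × (Y × Y') | (p.1.1, p.2.1) ∈ R ∧ (p.1.2, p.2.2) ∈ Q}
      (ν₁.map fun a => (x, a)) (ν₂.map fun b => (y, b)) :=
  dp_map measurable_prodMk_left measurable_prodMk_left (fun _ _ hab => ⟨hxy, hab⟩) h

/-- Strength law of the graded relational lifting for differential privacy. -/
theorem dp_strength {X Y X' Y' : Type*} [MeasurableSpace X] [MeasurableSpace Y]
    [MeasurableSpace X'] [MeasurableSpace Y']
    (R : Set (X × Y)) (Q : Set (X' × Y')) (ε δ : NNReal)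
    (x : X) (y : Y) (hxy : (x, y) ∈ R)
    (ν₁ : Measure X') (ν₂ : Measure Y')
    [IsProbabilityMeasure ν₁] [IsProbabilityMeasure ν₂]
    (h : dp ε δ Q ν₁ ν₂) :
    dp ε δ
      {p : (X × X') × (Y × Y') | (p.1.1, p.2.1) ∈ R ∧ (p.1.2, p.2.2) ∈ Q}
      (ν₁.map fun a => (x, a)) (ν₂.map fun b => (y, b)) :=
  dp_strength_general R Q ε δ x y hxy ν₁ ν₂ h
end

section
/- Let X be a measurable space and μ₁, μ₂ probability measures on X such that dp(ε,δ)(Eq)(μ₁, μ₂) holds, where Eq = {(x, y) ∈ X × X | x = y}. Then for every measurable set S ⊆ X, μ₁ S ≤ exp(ε)·μ₂ S + δ; that is, the pair (μ₁, μ₂) satisfies the standard (ε,δ)-differential-privacy closeness condition on measurable events. -/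
/-! The lifting at the equality relation may be tested on the same post-processing `f` on both
sides, for which the premise `Scond 0 0 (f x) (f x)` is trivial. Taking for `f` the deterministic
test `x ↦ dirac (x ∉ S)`, the measure `μ.bind f` puts mass `μ S` on `false`. -/

open MeasureTheory ENNReal

theorem scond_zero_self (ν : Measure Bool) : Scond 0 0 ν ν := by
  simp [Scond]

theorem dp.scond_bind_of_eq {X : Type*} [MeasurableSpace X] {ε δ : NNReal} {μ₁ μ₂ : Measure X}
    (h : dp ε δ {p : X × X | p.1 = p.2} μ₁ μ₂) {f : X → Measure Bool} (hf : Measurable f)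
    (hf_prob : ∀ x, IsProbabilityMeasure (f x)) :
    Scond ε δ (μ₁.bind f) (μ₂.bind f) := by
  have hR : ∀ x y, (x, y) ∈ {p : X × X | p.1 = p.2} → Scond 0 0 (f x) (f y) := by
    rintro x y (rfl : x = y)
    exact scond_zero_self (f x)
  simpa using h 0 0 f f hf hf hf_prob hf_prob hR

theorem measurable_decide_notMem {X : Type*} [MeasurableSpace X] {S : Set X}
    [DecidablePred (· ∈ S)] (hS : MeasurableSet S) : Measurable fun x => decide (x ∉ S) :=
  measurable_to_bool (by convert hS.compl; ext; simp)

theorem bind_dirac_decide_notMem_apply_false {X : Type*} [MeasurableSpace X] (μ : Measure X)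
    {S : Set X} [DecidablePred (· ∈ S)] (hS : MeasurableSet S) :
    (μ.bind fun x => Measure.dirac (decide (x ∉ S))) {false} = μ S := by
  have hg := measurable_decide_notMem hS
  rw [Measure.bind_dirac_eq_map μ hg, Measure.map_apply hg (measurableSet_singleton false)]
  congr 1
  ext x
  simp

theorem dp_eq_event_bound_general {X : Type*} [MeasurableSpace X] (ε δ : NNReal)
    (μ₁ μ₂ : Measure X)
    (h : dp ε δ {p : X × X | p.1 = p.2} μ₁ μ₂)
    (S : Set X) (hS : MeasurableSet S) :
    μ₁ S ≤ ENNReal.ofReal (Real.exp ε) * μ₂ S + δ := by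
  classical
  have hf : Measurable fun x => Measure.dirac (decide (x ∉ S)) :=
    Measure.measurable_dirac.comp (measurable_decide_notMem hS)
  have key := h.scond_bind_of_eq hf fun _ => inferInstance
  rwa [Scond, bind_dirac_decide_notMem_apply_false μ₁ hS,
    bind_dirac_decide_notMem_apply_false μ₂ hS] at key

/-- The lifting at the equality relation entails the standard
(ε,δ)-differential-privacy closeness condition on measurable events. -/
theorem dp_eq_event_bound {X : Type*} [MeasurableSpace X] (ε δ : NNReal)
    (μ₁ μ₂ : Measure X) [IsProbabilityMeasure μ₁] [IsProbabilityMeasure μ₂]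
    (h : dp ε δ {p : X × X | p.1 = p.2} μ₁ μ₂)
    (S : Set X) (hS : MeasurableSet S) :
    μ₁ S ≤ ENNReal.ofReal (Real.exp ε) * μ₂ S + δ :=
  dp_eq_event_bound_general ε δ μ₁ μ₂ h S hS
end

section
/- Let X be a measurable space and μ₁, μ₂ probability measures on X such that dp(0,δ)(Eq)(μ₁, μ₂) holds, where Eq = {(x, y) ∈ X × X | x = y}. Then for every measurable set S ⊆ X, both μ₁ S ≤ μ₂ S + δ and μ₂ S ≤ μ₁ S + δ hold; that is, the statistical distance between μ₁ and μ₂ is at most δ. (This is the stated interpretation of derivable relational judgments with postcondition equality and grading δ in the higher-order probabilistic relational logic.) -/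
open MeasureTheory ENNReal

/- The lifting is tested against the deterministic kernel `x ↦ dirac (x ∉ S)`: it relates equal
points with grading `(0,0)`, and binding a measure to it puts mass `μ S` on `false`. -/
theorem dp.apply_le_of_diagonal {X : Type*} [MeasurableSpace X] {ε δ : NNReal}
    {μ₁ μ₂ : Measure X} (h : dp ε δ {p : X × X | p.1 = p.2} μ₁ μ₂)
    {S : Set X} (hS : MeasurableSet S) :
    μ₁ S ≤ ENNReal.ofReal (Real.exp ε) * μ₂ S + δ := by
  classical
  set φ : X → Bool := fun x => decide (x ∉ S)
  have hφ : Measurable φ := measurable_to_bool <| by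
    rw [show φ ⁻¹' {true} = Sᶜ by ext x; simp [φ]]
    exact hS.compl
  have hφS : φ ⁻¹' {false} = S := by ext x; simp [φ]
  have hbind (μ : Measure X) : (μ.bind fun x => Measure.dirac (φ x)) {false} = μ S := by
    rw [Measure.bind_dirac_eq_map μ hφ, Measure.map_apply hφ (measurableSet_singleton false),
      hφS]
  have hdiag : ∀ x y, (x, y) ∈ {p : X × X | p.1 = p.2} →
      Scond 0 0 (Measure.dirac (φ x)) (Measure.dirac (φ y)) := by
    rintro x y (rfl : x = y)
    simp [Scond]
  have hφ' : Measurable fun x => Measure.dirac (φ x) := Measure.measurable_dirac.comp hφ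
  simpa [Scond, hbind] using
    h 0 0 _ _ hφ' hφ' (fun _ => inferInstance) (fun _ => inferInstance) hdiag

theorem prob_le_add_of_prob_compl_le_add {X : Type*} [MeasurableSpace X] {μ ν : Measure X}
    [IsProbabilityMeasure μ] [IsProbabilityMeasure ν] {S : Set X} (hS : MeasurableSet S)
    {c : ℝ≥0∞} (h : μ Sᶜ ≤ ν Sᶜ + c) : ν S ≤ μ S + c := by
  refine ENNReal.le_of_add_le_add_right (measure_ne_top ν Sᶜ) ?_
  calc ν S + ν Sᶜ = μ S + μ Sᶜ := by rw [prob_add_prob_compl hS, prob_add_prob_compl hS]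
    _ ≤ μ S + (ν Sᶜ + c) := by gcongr
    _ = μ S + c + ν Sᶜ := by ring

/-- The lifting at the equality relation with grading (0, δ) entails that the statistical
distance between the two measures is at most δ. -/
theorem dp_zero_eq_statistical_distance {X : Type*} [MeasurableSpace X] (δ : NNReal)
    (μ₁ μ₂ : Measure X) [IsProbabilityMeasure μ₁] [IsProbabilityMeasure μ₂]
    (h : dp 0 δ {p : X × X | p.1 = p.2} μ₁ μ₂)
    (S : Set X) (hS : MeasurableSet S) :
    μ₁ S ≤ μ₂ S + δ ∧ μ₂ S ≤ μ₁ S + δ := by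
  have hle {T : Set X} (hT : MeasurableSet T) : μ₁ T ≤ μ₂ T + δ := by
    simpa using h.apply_le_of_diagonal hT
  exact ⟨hle hS, prob_le_add_of_prob_compl_le_add hS (hle hS.compl)⟩
end

section
/- Let α be a type with decidable equality, B₁ a nonempty finite set (Finset) in α, and B₂ ⊆ B₁ a nonempty subset. Then for every set S ⊆ α, the probabilities assigned to S by the uniform distribution on B₁ and by the uniform distribution on B₂ differ by at most (B₁.card − B₂.card)/B₁.card = 1 − B₂.card/B₁.card; i.e., |Pr_{y ~ Unif(B₁)}[y ∈ S] − Pr_{y ~ Unif(B₂)}[y ∈ S]| ≤ 1 − B₂.card/B₁.card. (This statistical-distance bound between nested uniform distributions is the semantic content of the SAMPLE-R rule comparing uniform samplings from two finite sets.) -/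
open MeasureTheory ENNReal

private lemma sub_div_eq (m n : ℕ) (hm : 0 < m) (hmn : m ≤ n) :
    ((n - m : ℕ) : ℝ≥0∞) / n = 1 - (m : ℝ≥0∞) / n := by
  have hn : (n : ℝ≥0∞) ≠ 0 := Nat.cast_ne_zero.mpr (lt_of_lt_of_le hm hmn).ne'
  rw [ENNReal.natCast_sub, ENNReal.sub_div (fun _ _ => hn), ENNReal.div_self hn (by simp)]

private lemma key1 (a b m n : ℕ) (hm : 0 < m) (hmn : m ≤ n) (hab : a ≤ b + (n - m)) :
    (a : ℝ≥0∞) / n ≤ (b : ℝ≥0∞) / m + (1 - (m : ℝ≥0∞) / n) := by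
  rw [← sub_div_eq m n hm hmn]
  calc (a : ℝ≥0∞) / n ≤ ((b + (n - m) : ℕ) : ℝ≥0∞) / n := by
        gcongr
    _ = (b : ℝ≥0∞) / n + ((n - m : ℕ) : ℝ≥0∞) / n := by
        push_cast; rw [ENNReal.add_div]
    _ ≤ (b : ℝ≥0∞) / m + ((n - m : ℕ) : ℝ≥0∞) / n := by
        gcongr

private lemma key2 (b m n : ℕ) (hm : 0 < m) (hmn : m ≤ n) (hbm : b ≤ m) :
    (b : ℝ≥0∞) / m ≤ (b : ℝ≥0∞) / n + (1 - (m : ℝ≥0∞) / n) := by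
  have hm0 : (m : ℝ≥0∞) ≠ 0 := by exact_mod_cast hm.ne'
  have hmtop : (m : ℝ≥0∞) ≠ ⊤ := by simp
  have hle1 : (m : ℝ≥0∞) / n ≤ 1 := by
    apply ENNReal.div_le_of_le_mul; simpa using (by exact_mod_cast hmn : (m:ℝ≥0∞) ≤ n)
  have hb1 : (b : ℝ≥0∞) / m ≤ 1 := by
    apply ENNReal.div_le_of_le_mul; simpa using (by exact_mod_cast hbm : (b:ℝ≥0∞) ≤ m)
  calc (b : ℝ≥0∞) / m = (b : ℝ≥0∞) / m * ((m : ℝ≥0∞) / n + (1 - (m : ℝ≥0∞) / n)) := by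
        rw [add_tsub_cancel_of_le hle1, mul_one]
    _ = (b : ℝ≥0∞) / m * ((m : ℝ≥0∞) / n) + (b : ℝ≥0∞) / m * (1 - (m : ℝ≥0∞) / n) := by
        rw [mul_add]
    _ = (b : ℝ≥0∞) / n + (b : ℝ≥0∞) / m * (1 - (m : ℝ≥0∞) / n) := by
        rw [← mul_div_assoc, ENNReal.div_mul_cancel hm0 hmtop]
    _ ≤ (b : ℝ≥0∞) / n + 1 * (1 - (m : ℝ≥0∞) / n) := by gcongr
    _ = (b : ℝ≥0∞) / n + (1 - (m : ℝ≥0∞) / n) := by rw [one_mul]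

/-- Statistical distance between nested uniform distributions: the semantic content of
the `SAMPLE-R` rule comparing uniform samplings from two finite sets.  For
`B₂ ⊆ B₁` nonempty finite sets, the probabilities assigned to any set `S` by the
uniform distributions on `B₁` and on `B₂` differ by at most `1 - |B₂|/|B₁|`. -/
theorem uniform_nested_statistical_distance {α : Type*}
    (B₁ B₂ : Finset α) (h₂ : B₂.Nonempty) (hsub : B₂ ⊆ B₁) (S : Set α) :
    (PMF.uniformOfFinset B₁ (h₂.mono hsub)).toOuterMeasure S ≤
      (PMF.uniformOfFinset B₂ h₂).toOuterMeasure S + (1 - (B₂.card : ℝ≥0∞) / B₁.card) ∧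
    (PMF.uniformOfFinset B₂ h₂).toOuterMeasure S ≤
      (PMF.uniformOfFinset B₁ (h₂.mono hsub)).toOuterMeasure S
        + (1 - (B₂.card : ℝ≥0∞) / B₁.card) := by
  classical
  rw [PMF.toOuterMeasure_uniformOfFinset_apply, PMF.toOuterMeasure_uniformOfFinset_apply]
  set a := (B₁.filter (· ∈ S)).card with ha
  set b := (B₂.filter (· ∈ S)).card with hb
  have hm : 0 < B₂.card := Finset.card_pos.mpr h₂
  have hmn : B₂.card ≤ B₁.card := Finset.card_le_card hsub
  have hba : b ≤ a := Finset.card_le_card (Finset.filter_subset_filter _ hsub)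
  have hbm : b ≤ B₂.card := Finset.card_filter_le _ _
  have hab : a ≤ b + (B₁.card - B₂.card) := by
    have hsub' : B₁.filter (· ∈ S) ⊆ B₂.filter (· ∈ S) ∪ (B₁ \ B₂) := by
      intro x hx
      rw [Finset.mem_filter] at hx
      by_cases hx2 : x ∈ B₂
      · exact Finset.mem_union_left _ (Finset.mem_filter.mpr ⟨hx2, hx.2⟩)
      · exact Finset.mem_union_right _ (Finset.mem_sdiff.mpr ⟨hx.1, hx2⟩)
    calc a ≤ (B₂.filter (· ∈ S) ∪ (B₁ \ B₂)).card := Finset.card_le_card hsub'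
      _ ≤ b + (B₁ \ B₂).card := Finset.card_union_le _ _
      _ = b + (B₁.card - B₂.card) := by rw [Finset.card_sdiff_of_subset hsub]
  constructor
  · exact key1 a b B₂.card B₁.card hm hmn hab
  · calc (b : ℝ≥0∞) / B₂.card ≤ (b : ℝ≥0∞) / B₁.card + (1 - (B₂.card : ℝ≥0∞) / B₁.card) :=
        key2 b B₂.card B₁.card hm hmn hbm
      _ ≤ (a : ℝ≥0∞) / B₁.card + (1 - (B₂.card : ℝ≥0∞) / B₁.card) := by
        gcongr
end

section
/- Let l and k be natural numbers with k ≤ 2^l. Let μ_F be the uniform probability distribution on all functions Fin k → Fin (2^l) and μ_P the uniform probability distribution on the (nonempty) finite set of injective functions Fin k → Fin (2^l). Then for every set S of functions Fin k → Fin (2^l), |μ_F(S) − μ_P(S)| ≤ k·(k+1)/2^{l+1}. (This is the non-adaptive instance of the PRF/PRP Switching Lemma proved in the paper: the statistical distance between k answers of a random function and k answers of a random permutation on l-bit strings is at most k(k+1)/2^{l+1}.) -/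
/-!
Conditioned on the event that it is injective, a uniformly random function `Fin k → Fin N` is a
uniformly random injective function. Hence, for every event, the two distributions differ by at
most the probability that a uniformly random function is not injective. That probability is
`1 - N.descFactorial k / N ^ k = 1 - ∏_{i < k} (1 - i / N) ≤ ∑_{i < k} i / N = C(k, 2) / N`, and
with `N = 2 ^ l` this is at most `k (k + 1) / 2 ^ (l + 1)`.
-/

open scoped ENNReal
open Finset Function MeasureTheory

theorem Nat.mul_sub_descFactorial_le_choose_two_mul (N k : ℕ) :
    N * (N ^ k - N.descFactorial k) ≤ k.choose 2 * N ^ k := by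
  rw [Nat.mul_sub, tsub_le_iff_right]
  induction k with
  | zero => simp
  | succ k ih =>
    have hd : N * N.descFactorial k ≤ N ^ (k + 1) := by
      rw [pow_succ']
      exact Nat.mul_le_mul_left N (Nat.descFactorial_le_pow N k)
    -- `N ≤ (N - k) + k` holds also when `N < k`, so no case split on `k < N` is needed.
    have hN : N * N.descFactorial k * N ≤ N * ((N - k + k) * N.descFactorial k) := by
      rw [mul_right_comm, mul_assoc]
      exact Nat.mul_le_mul_left N (Nat.mul_le_mul_right _ le_tsub_add)
    calc N * N ^ (k + 1) = N * N ^ k * N := by ring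
      _ ≤ (k.choose 2 * N ^ k + N * N.descFactorial k) * N := Nat.mul_le_mul_right N ih
      _ ≤ k.choose 2 * N ^ (k + 1) + N * ((N - k + k) * N.descFactorial k) := by
        rw [pow_succ]
        linarith
      _ = k.choose 2 * N ^ (k + 1) + N * N.descFactorial (k + 1) +
          k * (N * N.descFactorial k) := by
        rw [Nat.descFactorial_succ]
        ring
      _ ≤ k.choose 2 * N ^ (k + 1) + N * N.descFactorial (k + 1) + k * N ^ (k + 1) := by
        gcongr
      _ = (k + 1).choose 2 * N ^ (k + 1) + N * N.descFactorial (k + 1) := by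
        rw [Nat.choose_succ_succ', Nat.choose_one_right]
        ring

theorem ENNReal.natCast_div_le_natCast_div_iff {a b c d : ℕ} (hb : b ≠ 0) (hd : d ≠ 0) :
    (a : ℝ≥0∞) / b ≤ c / d ↔ a * d ≤ c * b := by
  rw [ENNReal.div_le_iff (by simpa) (by simp), mul_comm, ← mul_div_assoc,
    ENNReal.le_div_iff_mul_le (by simp [hd]) (by simp), mul_comm (b : ℝ≥0∞)]
  norm_cast

namespace PMF

variable {α : Type*}

theorem toOuterMeasure_add_compl (p : PMF α) (s : Set α) :
    p.toOuterMeasure s + p.toOuterMeasure sᶜ = 1 := by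
  rw [toOuterMeasure_apply, toOuterMeasure_apply, ← ENNReal.tsum_add]
  simp only [Set.indicator_self_add_compl_apply, p.tsum_coe]

theorem toOuterMeasure_le_one (p : PMF α) (s : Set α) : p.toOuterMeasure s ≤ 1 :=
  le_self_add.trans_eq (p.toOuterMeasure_add_compl s)

section UniformOnSubset

variable [Fintype α] [Nonempty α] (T : Finset α) (hT : T.Nonempty) (S : Set α)

theorem toOuterMeasure_uniformOfFintype_inter :
    (uniformOfFintype α).toOuterMeasure (S ∩ T) =
      (uniformOfFinset T hT).toOuterMeasure S * (uniformOfFintype α).toOuterMeasure T := by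
  classical
  simp only [uniformOfFintype, toOuterMeasure_uniformOfFinset_apply, card_univ,
    Set.mem_inter_iff, mem_coe, filter_mem_eq_inter, univ_inter]
  rw [← mul_div_assoc, ENNReal.div_mul_cancel (by simp [hT.ne_empty]) (by simp)]
  congr 3
  ext
  simp [and_comm]

theorem toOuterMeasure_uniformOfFintype_le_uniformOfFinset_add_compl :
    (uniformOfFintype α).toOuterMeasure S ≤
      (uniformOfFinset T hT).toOuterMeasure S + (uniformOfFintype α).toOuterMeasure (↑T)ᶜ :=
  calc (uniformOfFintype α).toOuterMeasure S
      ≤ (uniformOfFintype α).toOuterMeasure (S ∩ T) +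
          (uniformOfFintype α).toOuterMeasure (↑T)ᶜ :=
        (measure_mono (Set.subset_inter_union_compl_right S T)).trans (measure_union_le _ _)
    _ = (uniformOfFinset T hT).toOuterMeasure S * (uniformOfFintype α).toOuterMeasure T +
          (uniformOfFintype α).toOuterMeasure (↑T)ᶜ := by
        rw [toOuterMeasure_uniformOfFintype_inter]
    _ ≤ _ := by
        gcongr
        exact mul_le_of_le_one_right' (toOuterMeasure_le_one _ _)

theorem toOuterMeasure_uniformOfFinset_le_uniformOfFintype_add_compl :
    (uniformOfFinset T hT).toOuterMeasure S ≤
      (uniformOfFintype α).toOuterMeasure S + (uniformOfFintype α).toOuterMeasure (↑T)ᶜ :=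
  calc (uniformOfFinset T hT).toOuterMeasure S
      = (uniformOfFinset T hT).toOuterMeasure S * ((uniformOfFintype α).toOuterMeasure T +
          (uniformOfFintype α).toOuterMeasure (↑T)ᶜ) := by
        rw [toOuterMeasure_add_compl, mul_one]
    _ = (uniformOfFintype α).toOuterMeasure (S ∩ T) +
          (uniformOfFinset T hT).toOuterMeasure S * (uniformOfFintype α).toOuterMeasure (↑T)ᶜ := by
        rw [mul_add, toOuterMeasure_uniformOfFintype_inter]
    _ ≤ _ := by
        gcongr
        · exact Set.inter_subset_left
        · exact mul_le_of_le_one_left' (toOuterMeasure_le_one _ _)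

end UniformOnSubset

theorem toOuterMeasure_uniformOfFintype_not_injective_le {β : Type*} [Fintype α] [DecidableEq α]
    [Fintype β] [Nonempty β] :
    (uniformOfFintype (α → β)).toOuterMeasure {f | ¬Injective f} ≤
      ((Fintype.card α).choose 2 : ℝ≥0∞) / Fintype.card β := by
  classical
  have hβ : Fintype.card β ≠ 0 := Fintype.card_ne_zero
  have hcard : Fintype.card {f : α → β | ¬Injective f} =
      Fintype.card β ^ Fintype.card α - (Fintype.card β).descFactorial (Fintype.card α) := by
    rw [← Fintype.card_fun, ← Fintype.card_embedding_eq,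
      ← Fintype.card_congr (Equiv.subtypeInjectiveEquivEmbedding α β)]
    exact Fintype.card_subtype_compl _
  rw [toOuterMeasure_uniformOfFintype_apply, hcard, Fintype.card_fun,
    ENNReal.natCast_div_le_natCast_div_iff (pow_ne_zero _ hβ) hβ, mul_comm]
  exact Nat.mul_sub_descFactorial_le_choose_two_mul _ _

end PMF

open PMF

/-- Non-adaptive instance of the PRF/PRP Switching Lemma: the statistical distance
between `k` answers of a uniformly random function `Fin k → Fin (2^l)` and `k` answers
of a uniformly random injective function (random permutation restricted to the queries)
is at most `k(k+1)/2^(l+1)`. -/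
theorem prf_prp_switching_lemma (l k : ℕ) (h : k ≤ 2 ^ l)
    (S : Set (Fin k → Fin (2 ^ l))) :
    (PMF.uniformOfFintype (Fin k → Fin (2 ^ l))).toOuterMeasure S ≤
      (PMF.uniformOfFinset
          (Finset.univ.filter fun f : Fin k → Fin (2 ^ l) => Function.Injective f)
          ⟨Fin.castLE h, Finset.mem_filter.mpr
            ⟨Finset.mem_univ _, Fin.castLE_injective h⟩⟩).toOuterMeasure S
        + ((k : ENNReal) * (k + 1)) / 2 ^ (l + 1) ∧
    (PMF.uniformOfFinset
        (Finset.univ.filter fun f : Fin k → Fin (2 ^ l) => Function.Injective f)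
        ⟨Fin.castLE h, Finset.mem_filter.mpr
          ⟨Finset.mem_univ _, Fin.castLE_injective h⟩⟩).toOuterMeasure S ≤
      (PMF.uniformOfFintype (Fin k → Fin (2 ^ l))).toOuterMeasure S
        + ((k : ENNReal) * (k + 1)) / 2 ^ (l + 1) := by
  set T := univ.filter fun f : Fin k → Fin (2 ^ l) => Injective f
  have hT : (↑T : Set (Fin k → Fin (2 ^ l)))ᶜ = {f | ¬Injective f} := by
    ext
    simp [T]
  have hcollision : (uniformOfFintype (Fin k → Fin (2 ^ l))).toOuterMeasure (↑T)ᶜ ≤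
      ((k : ℝ≥0∞) * (k + 1)) / 2 ^ (l + 1) :=
    calc (uniformOfFintype (Fin k → Fin (2 ^ l))).toOuterMeasure (↑T)ᶜ
        ≤ (k.choose 2 : ℝ≥0∞) / (2 ^ l : ℕ) := by
          simpa only [hT, Fintype.card_fin] using
            toOuterMeasure_uniformOfFintype_not_injective_le (α := Fin k) (β := Fin (2 ^ l))
      _ ≤ ((k * (k + 1) : ℕ) : ℝ≥0∞) / (2 ^ (l + 1) : ℕ) := by
          have hchoose : 2 * k.choose 2 ≤ k * (k + 1) := by
            rw [Nat.choose_two_right, mul_comm]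
            exact (Nat.div_mul_le_self _ 2).trans (Nat.mul_le_mul_left k (by omega))
          rw [ENNReal.natCast_div_le_natCast_div_iff (by positivity) (by positivity), pow_succ,
            mul_comm (2 ^ l), ← mul_assoc, mul_comm _ 2]
          exact Nat.mul_le_mul_right _ hchoose
      _ = ((k : ℝ≥0∞) * (k + 1)) / 2 ^ (l + 1) := by push_cast; rfl
  exact ⟨(toOuterMeasure_uniformOfFintype_le_uniformOfFinset_add_compl T _ S).trans
      (add_le_add_right hcollision _),
    (toOuterMeasure_uniformOfFinset_le_uniformOfFintype_add_compl T _ S).trans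
      (add_le_add_right hcollision _)⟩
end
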